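/- Let w be the fixed point of the morphism f : 1 ↦ 12, 2 ↦ 3, 3 ↦ 12 starting with 1 (so w = 12312123⋯). Let A_m, B_m, C_m be the positions of the m-th occurrence of the letters 1, 2, 3 respectively. Then for all m ≥ 1: B_m = A_m + 1; and for m ≥ 2, C_m = C_{m−1} + 3 if A_m − A_{m−1} = 2, and C_m = C_{m−1} + 5 otherwise; moreover A_m = mex{A_i, B_i, C_i : 1 ≤ i < m} ∪ {0} for m ≥ 2 (the least positive integer not among earlier values), with A₁ = 1, B₁ = 2, C₁ = 3. -/

import Mathlib

/-!
Because `w = f(w)`, the word is the concatenation of the blocks `f(w₁) f(w₂) ⋯`, the block of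
`wₙ₊₁` occupying the positions `ralLen w n + 1, …, ralLen w (n + 1)`, where
`ralLen w n = |f(w₁ ⋯ wₙ)|`. As the blocks are `12` and `3`, every `1` is followed by a `2`,
every `2` is preceded by a `1`, every `3` is followed by a `1`, and the `3`s sit exactly at the
positions `ralLen w (n + 1)` with `wₙ₊₁ = 2`. Hence `B = A + 1` and `C_m = ralLen w (B m)`;
consecutive `1`s are separated by `2` or by `23`, so `C` grows by `|f(12)| = 3` or
`|f(312)| = 5`. Finally `A_m ≤ B_m ≤ C_m`, so every position below `A_m` is an occurrence of
index `< m`, which is the mex property.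
-/

/-- The Raleigh morphism 1 ↦ 12, 2 ↦ 3, 3 ↦ 12. -/
def ralMor (a : ℕ) : List ℕ := if a = 2 then [3] else [1, 2]

/-- Applying the morphism to a finite word. -/
def ralSub (l : List ℕ) : List ℕ := l.flatMap ralMor

/-- `A` enumerates (for indices `m ≥ 1`, in increasing order) the positions
`i ≥ 1` where the infinite word `w` carries the letter `a`. -/
def EnumOcc (w : ℕ → ℕ) (a : ℕ) (A : ℕ → ℕ) : Prop :=
  (∀ m n, 1 ≤ m → m < n → A m < A n) ∧
  (∀ m, 1 ≤ m → 1 ≤ A m ∧ w (A m) = a) ∧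
  (∀ i, 1 ≤ i → w i = a → ∃ m, 1 ≤ m ∧ A m = i)

section PrefixWord

variable {α : Type*} {w : ℕ → α} {s : List α → List α} {l : List α} {m n : ℕ}

def prefixWord (w : ℕ → α) (n : ℕ) : List α := (List.range n).map fun i => w (i + 1)

@[simp]
lemma length_prefixWord : (prefixWord w n).length = n := by
  simp [prefixWord]

@[simp]
lemma getElem_prefixWord (i : ℕ) (hi : i < (prefixWord w n).length) :
    (prefixWord w n)[i] = w (i + 1) := by
  simp [prefixWord]

lemma prefixWord_succ : prefixWord w (n + 1) = prefixWord w n ++ [w (n + 1)] := by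
  simp [prefixWord, List.range_succ]

lemma take_prefixWord : (prefixWord w n).take m = prefixWord w (min m n) := by
  simp [prefixWord, ← List.map_take, List.take_range]

lemma prefixWord_isPrefix (h : m ≤ n) : prefixWord w m <+: prefixWord w n := by
  simpa [take_prefixWord, h] using List.take_prefix m (prefixWord w n)

lemma eq_prefixWord_of_isPrefix (h : l <+: prefixWord w n) : l = prefixWord w l.length := by
  have h' := List.prefix_iff_eq_take.mp h
  rw [take_prefixWord] at h'
  rw [h', length_prefixWord]

lemma eq_prefixWord_length (h : ∀ i (hi : i < l.length), w (i + 1) = l[i]) :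
    l = prefixWord w l.length :=
  List.ext_getElem (by simp) fun i hi _ => by simp [h i hi]

lemma apply_add_succ_of_prefixWord_eq_append (h : prefixWord w n = prefixWord w m ++ l)
    (j : ℕ) (hj : j < l.length) : w (m + j + 1) = l[j] := by
  have hlen : m + j < (prefixWord w n).length := by
    rw [h, List.length_append, length_prefixWord]; omega
  rw [← getElem_prefixWord (m + j) hlen, List.getElem_of_eq h hlen,
    List.getElem_append_right (by simp)]
  simp

/-- `s w = w` for the infinite word `w`, stated on its finite prefixes. -/
def IsFixedWord (s : List α → List α) (w : ℕ → α) : Prop :=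
  ∀ n, s (prefixWord w n) = prefixWord w (s (prefixWord w n)).length

lemma isFixedWord_of_iterate {u : List α} (hs : ∀ l₁ l₂, l₁ <+: l₂ → s l₁ <+: s l₂)
    (hw : ∀ k, s^[k] u = prefixWord w (s^[k] u).length)
    (hlen : ∀ n, ∃ k, n ≤ (s^[k] u).length) : IsFixedWord s w := by
  intro n
  obtain ⟨k, hk⟩ := hlen n
  apply eq_prefixWord_of_isPrefix (n := (s^[k + 1] u).length)
  rw [← hw (k + 1), Function.iterate_succ_apply']
  apply hs
  rw [hw k]
  exact prefixWord_isPrefix hk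

end PrefixWord

lemma Nat.exists_lt_le_succ_of_lt_of_le {f : ℕ → ℕ} {i N : ℕ} (h0 : f 0 < i) (hN : i ≤ f N) :
    ∃ n, f n < i ∧ i ≤ f (n + 1) := by
  have hex : ∃ N, i ≤ f N := ⟨N, hN⟩
  obtain ⟨n, hn⟩ : ∃ n, Nat.find hex = n + 1 :=
    Nat.exists_eq_succ_of_ne_zero fun h => by have := Nat.find_spec hex; rw [h] at this; omega
  exact ⟨n, not_le.mp (Nat.find_min hex (by omega)), hn ▸ Nat.find_spec hex⟩

section Raleigh

variable {w : ℕ → ℕ} {i n : ℕ}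

def ralLen (w : ℕ → ℕ) (n : ℕ) : ℕ := (ralSub (prefixWord w n)).length

lemma length_ralMor (a : ℕ) : (ralMor a).length = if a = 2 then 1 else 2 := by
  unfold ralMor; split_ifs <;> rfl

lemma ralLen_zero : ralLen w 0 = 0 := rfl

lemma ralLen_succ (w : ℕ → ℕ) (n : ℕ) :
    ralLen w (n + 1) = ralLen w n + (ralMor (w (n + 1))).length := by
  simp [ralLen, ralSub, prefixWord_succ]

lemma ralLen_strictMono (w : ℕ → ℕ) : StrictMono (ralLen w) :=
  strictMono_nat_of_lt_succ fun n => by rw [ralLen_succ, length_ralMor]; split_ifs <;> omega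

lemma le_ralLen (w : ℕ → ℕ) (n : ℕ) : n ≤ ralLen w n := (ralLen_strictMono w).id_le n

lemma length_le_length_ralSub (l : List ℕ) : l.length ≤ (ralSub l).length := by
  induction l with
  | nil => simp
  | cons a t ih =>
    simp only [ralSub, List.flatMap_cons, List.length_append, List.length_cons] at ih ⊢
    rw [length_ralMor]; split_ifs <;> omega

lemma exists_ralSub_iterate_eq_cons (k : ℕ) : ∃ t, ralSub^[k] [1] = 1 :: t := by
  induction k with
  | zero => exact ⟨[], rfl⟩
  | succ k ih =>
    obtain ⟨t, ht⟩ := ih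
    exact ⟨2 :: ralSub t, by rw [Function.iterate_succ_apply', ht]; rfl⟩

lemma lt_length_ralSub_iterate (k : ℕ) : k < (ralSub^[k] [1]).length := by
  induction k with
  | zero => simp
  | succ k ih =>
    obtain ⟨t, ht⟩ := exists_ralSub_iterate_eq_cons k
    have hsub : ralSub (1 :: t) = 1 :: 2 :: ralSub t := rfl
    have := length_le_length_ralSub t
    rw [Function.iterate_succ_apply', ht, hsub]
    rw [ht] at ih
    simp only [List.length_cons] at ih ⊢
    omega

lemma isFixedWord_ralSub
    (hw : ∀ k i, i < (ralSub^[k] [1]).length → w (i + 1) = (ralSub^[k] [1])[i]!) :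
    IsFixedWord ralSub w :=
  isFixedWord_of_iterate (fun _ _ h => h.flatMap ralMor)
    (fun k => eq_prefixWord_length fun i hi => by rw [hw k i hi, getElem!_pos _ i hi])
    (fun n => ⟨n, (lt_length_ralSub_iterate n).le⟩)

end Raleigh

namespace IsFixedWord

variable {w : ℕ → ℕ} {i n : ℕ} (hw : IsFixedWord ralSub w)
include hw

lemma prefixWord_ralLen_succ (n : ℕ) :
    prefixWord w (ralLen w (n + 1)) = prefixWord w (ralLen w n) ++ ralMor (w (n + 1)) := by
  have hfix : ∀ n, ralSub (prefixWord w n) = prefixWord w (ralLen w n) := hw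
  rw [← hfix, ← hfix, prefixWord_succ, ralSub, ralSub, List.flatMap_append]
  simp

lemma apply_ralLen_of_ne_two (h : w (n + 1) ≠ 2) :
    w (ralLen w n + 1) = 1 ∧ w (ralLen w n + 2) = 2 := by
  have hblock := apply_add_succ_of_prefixWord_eq_append (hw.prefixWord_ralLen_succ n)
  simp only [ralMor, if_neg h] at hblock
  exact ⟨hblock 0 (by simp), hblock 1 (by simp)⟩

lemma apply_ralLen_succ_of_two (h : w (n + 1) = 2) : w (ralLen w (n + 1)) = 3 := by
  have hblock := apply_add_succ_of_prefixWord_eq_append (hw.prefixWord_ralLen_succ n)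
  simp only [ralMor, if_pos h] at hblock
  rw [ralLen_succ, h]
  exact hblock 0 (by simp)

/-- Position `i` lies in the image of the letter at position `n + 1`. -/
lemma exists_block (hi : 1 ≤ i) : ∃ n,
    (w (n + 1) = 2 ∧ i = ralLen w (n + 1) ∧ w i = 3) ∨
    (w (n + 1) ≠ 2 ∧ i = ralLen w n + 1 ∧ w i = 1) ∨
    (w (n + 1) ≠ 2 ∧ i = ralLen w n + 2 ∧ w i = 2) := by
  obtain ⟨n, hlt, hle⟩ := Nat.exists_lt_le_succ_of_lt_of_le
    (by rw [ralLen_zero]; omega : ralLen w 0 < i) (le_ralLen w i)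
  refine ⟨n, ?_⟩
  rw [ralLen_succ, length_ralMor] at hle
  by_cases h2 : w (n + 1) = 2
  · rw [if_pos h2] at hle
    have hi' : i = ralLen w (n + 1) := by rw [ralLen_succ, length_ralMor, if_pos h2]; omega
    exact Or.inl ⟨h2, hi', hi' ▸ hw.apply_ralLen_succ_of_two h2⟩
  · rw [if_neg h2] at hle
    obtain ⟨h1, h2'⟩ := hw.apply_ralLen_of_ne_two h2
    obtain rfl | rfl : i = ralLen w n + 1 ∨ i = ralLen w n + 2 := by omega
    exacts [Or.inr (Or.inl ⟨h2, rfl, h1⟩), Or.inr (Or.inr ⟨h2, rfl, h2'⟩)]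

lemma apply_mem (hi : 1 ≤ i) : w i = 1 ∨ w i = 2 ∨ w i = 3 := by
  obtain ⟨n, ⟨-, -, h⟩ | ⟨-, -, h⟩ | ⟨-, -, h⟩⟩ := hw.exists_block hi <;> simp [h]

lemma apply_succ_eq_two (hi : 1 ≤ i) (h : w i = 1) : w (i + 1) = 2 := by
  obtain ⟨n, ⟨-, -, h3⟩ | ⟨h2, rfl, -⟩ | ⟨-, -, h3⟩⟩ := hw.exists_block hi
  · omega
  · exact (hw.apply_ralLen_of_ne_two h2).2
  · omega

lemma apply_eq_one_of_succ_eq_two (h : w (i + 1) = 2) : 1 ≤ i ∧ w i = 1 := by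
  obtain ⟨n, ⟨-, -, h3⟩ | ⟨-, -, h1⟩ | ⟨h2, hi, -⟩⟩ := hw.exists_block (Nat.le_add_left 1 i)
  · omega
  · omega
  · obtain rfl : i = ralLen w n + 1 := by omega
    exact ⟨by omega, (hw.apply_ralLen_of_ne_two h2).1⟩

lemma exists_eq_ralLen_of_eq_three (hi : 1 ≤ i) (h : w i = 3) :
    ∃ n, w (n + 1) = 2 ∧ i = ralLen w (n + 1) := by
  obtain ⟨n, ⟨h2, hi, -⟩ | ⟨-, -, h1⟩ | ⟨-, -, h1⟩⟩ := hw.exists_block hi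
  · exact ⟨n, h2, hi⟩
  · omega
  · omega

lemma apply_succ_eq_one_of_eq_three (hi : 1 ≤ i) (h : w i = 3) : w (i + 1) = 1 := by
  obtain ⟨n, h2, rfl⟩ := hw.exists_eq_ralLen_of_eq_three hi h
  have hn : w (n + 1 + 1) ≠ 2 := fun h' => by
    have := (hw.apply_eq_one_of_succ_eq_two h').2
    omega
  exact (hw.apply_ralLen_of_ne_two hn).1

end IsFixedWord

namespace EnumOcc

variable {w : ℕ → ℕ} {a : ℕ} {A A' : ℕ → ℕ} {m i : ℕ}

lemma strictMonoOn (h : EnumOcc w a A) : StrictMonoOn A (Set.Ici 1) :=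
  fun m hm n _ hmn => h.1 m n hm hmn

lemma exists_le_eq (h : EnumOcc w a A) (h' : EnumOcc w a A') (hm : 1 ≤ m) :
    ∃ k, m ≤ k ∧ A' m = A k := by
  induction m, hm using Nat.le_induction with
  | base =>
    obtain ⟨k, hk, e⟩ := h.2.2 _ (h'.2.1 1 le_rfl).1 (h'.2.1 1 le_rfl).2
    exact ⟨k, hk, e.symm⟩
  | succ m hm ih =>
    obtain ⟨k, hmk, hk⟩ := ih
    obtain ⟨hpos, ha⟩ := h'.2.1 (m + 1) (by omega)
    obtain ⟨k', hk'1, hk'⟩ := h.2.2 _ hpos ha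
    have hlt : A k < A k' := by rw [← hk, hk']; exact h'.1 m (m + 1) hm (by omega)
    have := (h.strictMonoOn.lt_iff_lt (Set.mem_Ici.mpr (by omega)) hk'1).mp hlt
    exact ⟨k', by omega, hk'.symm⟩

lemma le_of_enumOcc (h : EnumOcc w a A) (h' : EnumOcc w a A') (hm : 1 ≤ m) : A m ≤ A' m := by
  obtain ⟨k, hk, e⟩ := exists_le_eq h h' hm
  exact e ▸ h.strictMonoOn.monotoneOn hm (Set.mem_Ici.mpr (by omega)) hk

lemma unique (h : EnumOcc w a A) (h' : EnumOcc w a A') (hm : 1 ≤ m) : A m = A' m :=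
  le_antisymm (h.le_of_enumOcc h' hm) (h'.le_of_enumOcc h hm)

lemma apply_one_le (h : EnumOcc w a A) (hi : 1 ≤ i) (ha : w i = a) : A 1 ≤ i := by
  obtain ⟨k, hk, rfl⟩ := h.2.2 i hi ha
  exact h.strictMonoOn.monotoneOn (Set.mem_Ici.mpr le_rfl) hk hk

lemma apply_succ_le (h : EnumOcc w a A) (hm : 1 ≤ m) (hi : A m < i) (ha : w i = a) :
    A (m + 1) ≤ i := by
  obtain ⟨k, hk, rfl⟩ := h.2.2 i (by omega) ha
  have := (h.strictMonoOn.lt_iff_lt hm hk).mp hi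
  exact h.strictMonoOn.monotoneOn (Set.mem_Ici.mpr (by omega)) hk this

lemma isLeast_mex {b c : ℕ} {B C : ℕ → ℕ} (hA : EnumOcc w a A) (hB : EnumOcc w b B)
    (hC : EnumOcc w c C) (hab : a ≠ b) (hac : a ≠ c)
    (hcover : ∀ i, 1 ≤ i → w i = a ∨ w i = b ∨ w i = c)
    (hAB : ∀ j, 1 ≤ j → A j ≤ B j) (hAC : ∀ j, 1 ≤ j → A j ≤ C j) (hm : 1 ≤ m) :
    IsLeast {x | 1 ≤ x ∧ ∀ i, 1 ≤ i → i < m → x ≠ A i ∧ x ≠ B i ∧ x ≠ C i} (A m) := by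
  obtain ⟨hApos, hAa⟩ := hA.2.1 m hm
  refine ⟨⟨hApos, fun i hi him => ⟨(hA.1 i m hi him).ne', ?_, ?_⟩⟩, ?_⟩
  · exact fun e => hab (by rw [← hAa, e, (hB.2.1 i hi).2])
  · exact fun e => hac (by rw [← hAa, e, (hC.2.1 i hi).2])
  rintro x ⟨hx1, hx⟩
  by_contra! hlt
  obtain ⟨j, hj, hAj, hxj⟩ : ∃ j, 1 ≤ j ∧ A j ≤ x ∧ (x = A j ∨ x = B j ∨ x = C j) := by
    rcases hcover x hx1 with ha | hb | hc
    · obtain ⟨j, hj, rfl⟩ := hA.2.2 x hx1 ha; exact ⟨j, hj, le_rfl, Or.inl rfl⟩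
    · obtain ⟨j, hj, rfl⟩ := hB.2.2 x hx1 hb; exact ⟨j, hj, hAB j hj, Or.inr (Or.inl rfl)⟩
    · obtain ⟨j, hj, rfl⟩ := hC.2.2 x hx1 hc; exact ⟨j, hj, hAC j hj, Or.inr (Or.inr rfl)⟩
  have hjm := (hA.strictMonoOn.lt_iff_lt hj hm).mp (hAj.trans_lt hlt)
  obtain ⟨h1, h2, h3⟩ := hx j hj hjm
  rcases hxj with e | e | e <;> contradiction

end EnumOcc

namespace IsFixedWord

variable {w : ℕ → ℕ} {A B : ℕ → ℕ} {m : ℕ} (hw : IsFixedWord ralSub w)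
include hw

lemma enumOcc_add_one (hA : EnumOcc w 1 A) : EnumOcc w 2 (A · + 1) := by
  refine ⟨fun m n hm hmn => Nat.succ_lt_succ (hA.1 m n hm hmn), fun m hm => ?_, fun i hi h2 => ?_⟩
  · dsimp only
    obtain ⟨hpos, h1⟩ := hA.2.1 m hm
    exact ⟨by omega, hw.apply_succ_eq_two hpos h1⟩
  · obtain ⟨k, rfl⟩ : ∃ k, i = k + 1 := ⟨i - 1, by omega⟩
    obtain ⟨hk, h1⟩ := hw.apply_eq_one_of_succ_eq_two h2
    obtain ⟨m, hm, rfl⟩ := hA.2.2 k hk h1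
    exact ⟨m, hm, rfl⟩

lemma enumOcc_ralLen (hB : EnumOcc w 2 B) : EnumOcc w 3 (ralLen w <| B ·) := by
  refine ⟨fun m n hm hmn => ralLen_strictMono w (hB.1 m n hm hmn), fun m hm => ?_,
    fun i hi h3 => ?_⟩
  · dsimp only
    obtain ⟨hpos, h2⟩ := hB.2.1 m hm
    obtain ⟨k, hk⟩ : ∃ k, B m = k + 1 := ⟨B m - 1, by omega⟩
    rw [hk] at h2 ⊢
    exact ⟨(le_ralLen w _).trans' (by omega), hw.apply_ralLen_succ_of_two h2⟩
  · obtain ⟨n, h2, rfl⟩ := hw.exists_eq_ralLen_of_eq_three hi h3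
    obtain ⟨m, hm, hmB⟩ := hB.2.2 (n + 1) (by omega) h2
    exact ⟨m, hm, congrArg (ralLen w) hmB⟩

lemma apply_succ_eq_add_two_or_add_three (hA : EnumOcc w 1 A) (hm : 1 ≤ m) :
    (A (m + 1) = A m + 2 ∧ w (A m + 2) = 1) ∨ (A (m + 1) = A m + 3 ∧ w (A m + 2) = 3) := by
  obtain ⟨hpos, h1⟩ := hA.2.1 m hm
  have h2 := hw.apply_succ_eq_two hpos h1
  have hnext := hA.1 m (m + 1) hm (by omega)
  have hnext1 := (hA.2.1 (m + 1) (by omega)).2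
  have hne : A (m + 1) ≠ A m + 1 := fun e => by rw [e, h2] at hnext1; omega
  rcases hw.apply_mem (i := A m + 2) (by omega) with h1' | h2' | h3'
  · exact Or.inl ⟨le_antisymm (hA.apply_succ_le hm (by omega) h1') (by omega), h1'⟩
  · have := (hw.apply_eq_one_of_succ_eq_two (i := A m + 1) h2').2
    omega
  · have h1' := hw.apply_succ_eq_one_of_eq_three (i := A m + 2) (by omega) h3'
    have hne2 : A (m + 1) ≠ A m + 2 := fun e => by rw [e, h3'] at hnext1; omega
    exact Or.inr ⟨le_antisymm (hA.apply_succ_le hm (by omega) h1') (by omega), h3'⟩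

lemma ralLen_apply_succ_add_one_cases (hA : EnumOcc w 1 A) (hm : 1 ≤ m) :
    (A (m + 1) = A m + 2 ∧ ralLen w (A (m + 1) + 1) = ralLen w (A m + 1) + 3) ∨
    (A (m + 1) = A m + 3 ∧ ralLen w (A (m + 1) + 1) = ralLen w (A m + 1) + 5) := by
  have hlen := fun n => ralLen_succ w n
  simp only [length_ralMor] at hlen
  rcases hw.apply_succ_eq_add_two_or_add_three hA hm with ⟨he, h1⟩ | ⟨he, h3⟩
  · have h2 := hw.apply_succ_eq_two (i := A m + 2) (by omega) h1
    refine Or.inl ⟨he, ?_⟩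
    rw [he, hlen, hlen (A m + 1)]
    simp [h1, h2]
  · have h1 := hw.apply_succ_eq_one_of_eq_three (by omega) h3
    have h2 := hw.apply_succ_eq_two (i := A m + 2 + 1) (by omega) h1
    refine Or.inr ⟨he, ?_⟩
    rw [he, hlen, hlen (A m + 2), hlen (A m + 1)]
    simp [h1, h2, h3]

end IsFixedWord

/-- In the fixed point of 1 ↦ 12, 2 ↦ 3, 3 ↦ 12 starting with 1, the positions
A_m, B_m, C_m of the m-th letters 1, 2, 3 satisfy the recursive description of
the P-positions of the Raleigh game. -/
theorem raleigh_word_recursive_characterization (w : ℕ → ℕ)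
    (hw : ∀ k i, i < (ralSub^[k] [1]).length → w (i + 1) = (ralSub^[k] [1])[i]!)
    (A B C : ℕ → ℕ)
    (hA : EnumOcc w 1 A) (hB : EnumOcc w 2 B) (hC : EnumOcc w 3 C) :
    A 1 = 1 ∧ B 1 = 2 ∧ C 1 = 3 ∧
    (∀ m, 1 ≤ m → B m = A m + 1) ∧
    (∀ m, 2 ≤ m →
      (A m - A (m - 1) = 2 → C m = C (m - 1) + 3) ∧
      (A m - A (m - 1) ≠ 2 → C m = C (m - 1) + 5)) ∧
    (∀ m, 2 ≤ m →
      A m = sInf {x : ℕ | 1 ≤ x ∧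
        ∀ i, 1 ≤ i → i < m → x ≠ A i ∧ x ≠ B i ∧ x ≠ C i}) := by
  have hfix := isFixedWord_ralSub hw
  have hw1 : w 1 = 1 := by simpa using hw 0 0 (by simp)
  have hBA : ∀ m, 1 ≤ m → B m = A m + 1 := fun m hm => hB.unique (hfix.enumOcc_add_one hA) hm
  have hCA : ∀ m, 1 ≤ m → C m = ralLen w (A m + 1) := fun m hm => by
    rw [hC.unique (hfix.enumOcc_ralLen hB) hm, hBA m hm]
  have hA1 : A 1 = 1 := le_antisymm (hA.apply_one_le le_rfl hw1) (hA.2.1 1 le_rfl).1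
  refine ⟨hA1, by rw [hBA 1 le_rfl, hA1], ?_, hBA, fun m hm => ?_, fun m hm => ?_⟩
  · have hw2 := hfix.apply_succ_eq_two le_rfl hw1
    rw [hCA 1 le_rfl, hA1, ralLen_succ, ralLen_succ w 0]
    simp [hw1, hw2, ralLen_zero, length_ralMor]
  · obtain ⟨k, rfl⟩ : ∃ k, m = k + 1 := ⟨m - 1, by omega⟩
    rw [Nat.add_sub_cancel, hCA k (by omega), hCA (k + 1) (by omega)]
    rcases hfix.ralLen_apply_succ_add_one_cases hA (m := k) (by omega) with
      ⟨hgap, hstep⟩ | ⟨hgap, hstep⟩ <;> omega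
  · have hAB : ∀ j, 1 ≤ j → A j ≤ B j := fun j hj => (hBA j hj).ge.trans' (Nat.le_succ _)
    have hAC : ∀ j, 1 ≤ j → A j ≤ C j := fun j hj => by
      rw [hCA j hj]
      exact (le_ralLen w _).trans' (Nat.le_succ _)
    exact ((hA.isLeast_mex hB hC (by decide) (by decide) (fun _ => hfix.apply_mem) hAB hAC
      (by omega)).csInf_eq).symm
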